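/- Tight upper bound on postselected swap fidelity: for ρ₁, ρ₂ ∈ S_{p,F} (two-qubit states of the form p|Ψ₀₀⟩⟨Ψ₀₀| + (1−p)σ_k with fidelity F), the postselected fidelity after Bell-state measurement outcome 00 satisfies F'₀₀(ρ₁⊗ρ₂) ≤ 1 − 2p(1−F). More generally, if ρ_k ∈ S_{p_k,F_k}, then F'₀₀ ≤ 1 − p₁(1−F₂) − p₂(1−F₁). -/

import Mathlib

open Matrix Kronecker BigOperators ComplexOrder

noncomputable section

/-- Pauli X matrix. -/
def PX : Matrix (Fin 2) (Fin 2) ℂ := !![0, 1; 1, 0]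

/-- Pauli Y matrix. -/
def PY : Matrix (Fin 2) (Fin 2) ℂ := !![0, -Complex.I; Complex.I, 0]

/-- Pauli Z matrix. -/
def PZ : Matrix (Fin 2) (Fin 2) ℂ := !![1, 0; 0, -1]

/-- The maximally entangled two-qubit state (|00⟩+|11⟩)/√2, as a vector. -/
def bell00 : Fin 2 × Fin 2 → ℂ := fun p => if p.1 = p.2 then ((1 / Real.sqrt 2 : ℝ) : ℂ) else 0

/-- The Bell basis vector |Ψ_ij⟩ = (I ⊗ X^i Z^j)|Ψ₀₀⟩. -/
def bell (i j : Fin 2) : Fin 2 × Fin 2 → ℂ :=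
  (((1 : Matrix (Fin 2) (Fin 2) ℂ) ⊗ₖ (PX ^ (i : ℕ) * PZ ^ (j : ℕ)))).mulVec bell00

/-- The inner product ⟨φ|M|ψ⟩. -/
def braket2 {n : Type*} [Fintype n] (φ : n → ℂ) (M : Matrix n n ℂ) (ψ : n → ℂ) : ℂ :=
  star φ ⬝ᵥ M.mulVec ψ

/-- A density matrix: positive semidefinite with unit trace. -/
def IsDensity {n : Type*} [Fintype n] (ρ : Matrix n n ℂ) : Prop :=
  ρ.PosSemidef ∧ ρ.trace = 1

/-- The Bell-diagonal twirl B(ρ). -/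
def twirl (ρ : Matrix (Fin 2 × Fin 2) (Fin 2 × Fin 2) ℂ) :
    Matrix (Fin 2 × Fin 2) (Fin 2 × Fin 2) ℂ :=
  (1 / 4 : ℂ) • (ρ + (PX ⊗ₖ PX) * ρ * (PX ⊗ₖ PX)ᴴ + (PY ⊗ₖ PY) * ρ * (PY ⊗ₖ PY)ᴴ
    + (PZ ⊗ₖ PZ) * ρ * (PZ ⊗ₖ PZ)ᴴ)

/-- The Bell projector |Ψ_ij⟩⟨Ψ_ij|. -/
def bproj (i j : Fin 2) : Matrix (Fin 2 × Fin 2) (Fin 2 × Fin 2) ℂ :=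
  vecMulVec (bell i j) (star (bell i j))

/-- Partial inner product ⟨ψ|_{A₁A₂} M |ψ⟩_{A₁A₂} of a vector ψ on the middle registers
A₁,A₂ with an operator M on registers (B₁,A₁),(A₂,B₂), giving a matrix on B₁,B₂. -/
def swapProj (ψ : Fin 2 × Fin 2 → ℂ)
    (M : Matrix ((Fin 2 × Fin 2) × (Fin 2 × Fin 2)) ((Fin 2 × Fin 2) × (Fin 2 × Fin 2)) ℂ) :
    Matrix (Fin 2 × Fin 2) (Fin 2 × Fin 2) ℂ :=
  fun p q => ∑ a₁, ∑ a₂, ∑ a₁', ∑ a₂',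
    star (ψ (a₁, a₂)) * M ((p.1, a₁), (a₂, p.2)) ((q.1, a₁'), (a₂', q.2)) * ψ (a₁', a₂')

/-- The probability of Bell-measurement outcome ij on the middle registers:
p'_ij(M) = Tr[|Ψ_ij⟩⟨Ψ_ij|_{A₁A₂} M]. -/
def swapProb (i j : Fin 2)
    (M : Matrix ((Fin 2 × Fin 2) × (Fin 2 × Fin 2)) ((Fin 2 × Fin 2) × (Fin 2 × Fin 2)) ℂ) : ℂ :=
  (swapProj (bell i j) M).trace

/-- Tr[|Ψ_ij⟩⟨Ψ_ij|_{B₁B₂} |Ψ_ij⟩⟨Ψ_ij|_{A₁A₂} M]. -/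
def swapNum (i j : Fin 2)
    (M : Matrix ((Fin 2 × Fin 2) × (Fin 2 × Fin 2)) ((Fin 2 × Fin 2) × (Fin 2 × Fin 2)) ℂ) : ℂ :=
  braket2 (bell i j) (swapProj (bell i j) M) (bell i j)

/-- The postselected end-to-end fidelity F'_ij. -/
def swapFid (i j : Fin 2)
    (M : Matrix ((Fin 2 × Fin 2) × (Fin 2 × Fin 2)) ((Fin 2 × Fin 2) × (Fin 2 × Fin 2)) ℂ) : ℂ :=
  swapNum i j M / swapProb i j M

/-- The family S_{p,F}: two-qubit states of the form p|Ψ₀₀⟩⟨Ψ₀₀| + (1−p)σ for some density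
matrix σ, with fidelity ⟨Ψ₀₀|ρ|Ψ₀₀⟩ = F. -/
def Spf (p F : ℝ) : Set (Matrix (Fin 2 × Fin 2) (Fin 2 × Fin 2) ℂ) :=
  {ρ | (∃ σ : Matrix (Fin 2 × Fin 2) (Fin 2 × Fin 2) ℂ, IsDensity σ ∧
      ρ = (p : ℂ) • bproj 0 0 + ((1 - p : ℝ) : ℂ) • σ) ∧
    braket2 (bell 0 0) ρ (bell 0 0) = (F : ℂ)}

/-
Write ρₖ = pₖ Φ + (1 − pₖ) σₖ with Φ = |Ψ₀₀⟩⟨Ψ₀₀|. The numerator N and the denominator D of F'₀₀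
are bilinear in (ρ₁, ρ₂) and the terms containing Φ are explicit, so with δ = (1 − p₁)(1 − p₂),
t = N(σ₁ ⊗ σ₂) and s = D(σ₁ ⊗ σ₂):
  N = (p₁F₂ + p₂F₁ − p₁p₂)/4 + δ t,    D = (p₁ + p₂ − p₁p₂)/4 + δ s.
For the positive operator K = ⟨Ψ₀₀|_{A₁A₂} σ₁ ⊗ σ₂ |Ψ₀₀⟩_{A₁A₂} one has t = ⟨Ψ₀₀|K|Ψ₀₀⟩ ≤ Tr K = s;
and t = Tr(σ₁ σ̃₂)/4 ≤ Tr σ₁ · Tr σ̃₂ / 4 = 1/4, where σ̃₂ is σ₂ transposed with its qubits exchanged.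
With C = 1 − p₁(1 − F₂) − p₂(1 − F₁) this gives
  C D − N = C δ (s − t) + δ (1 − C) (1/4 − t) ≥ 0.
-/

local notation "Op₂" => Matrix (Fin 2 × Fin 2) (Fin 2 × Fin 2) ℂ
local notation "Op₄" => Matrix ((Fin 2 × Fin 2) × (Fin 2 × Fin 2)) ((Fin 2 × Fin 2) × (Fin 2 × Fin 2)) ℂ

namespace Matrix

variable {m n 𝕜 : Type*} [Fintype m] [Fintype n] [RCLike 𝕜]

section Frobenius

attribute [local instance] Matrix.frobeniusNormedAddCommGroup

lemma re_trace_conjTranspose_mul_self (X : Matrix m n 𝕜) :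
    RCLike.re (Xᴴ * X).trace = ‖X‖ ^ 2 := by
  rw [frobenius_norm_def, ← Real.rpow_natCast, ← Real.rpow_mul (by positivity), Finset.sum_comm]
  simp only [trace, diag, mul_apply, conjTranspose_apply, RCLike.star_def, RCLike.conj_mul,
    ← RCLike.ofReal_pow, ← RCLike.ofReal_sum, RCLike.ofReal_re]
  norm_num

open scoped MatrixOrder in
lemma PosSemidef.re_trace_mul_le [DecidableEq n] {A B : Matrix n n 𝕜}
    (hA : A.PosSemidef) (hB : B.PosSemidef) :
    RCLike.re (A * B).trace ≤ RCLike.re A.trace * RCLike.re B.trace := by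
  obtain ⟨X, rfl⟩ := CStarAlgebra.nonneg_iff_eq_star_mul_self.mp hA.nonneg
  obtain ⟨Y, rfl⟩ := CStarAlgebra.nonneg_iff_eq_star_mul_self.mp hB.nonneg
  simp only [star_eq_conjTranspose]
  have hcycle : (Xᴴ * X * (Yᴴ * Y)).trace = ((X * Yᴴ)ᴴ * (X * Yᴴ)).trace := by
    simp only [conjTranspose_mul, conjTranspose_conjTranspose, Matrix.mul_assoc]
    rw [trace_mul_comm Y]
    simp only [Matrix.mul_assoc]
  rw [hcycle, re_trace_conjTranspose_mul_self, re_trace_conjTranspose_mul_self,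
    re_trace_conjTranspose_mul_self, ← mul_pow, ← frobenius_norm_conjTranspose Y]
  gcongr
  exact frobenius_norm_mul X Yᴴ

end Frobenius

end Matrix

section braket

variable {n : Type*} [Fintype n]

lemma braket2_add (φ ψ : n → ℂ) (M N : Matrix n n ℂ) :
    braket2 φ (M + N) ψ = braket2 φ M ψ + braket2 φ N ψ := by
  simp only [braket2, add_mulVec, dotProduct_add]

lemma braket2_smul (φ ψ : n → ℂ) (c : ℂ) (M : Matrix n n ℂ) :
    braket2 φ (c • M) ψ = c * braket2 φ M ψ := by
  simp only [braket2, smul_mulVec, dotProduct_smul, smul_eq_mul]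

lemma braket2_eq_trace_mul_vecMulVec (φ : n → ℂ) (M : Matrix n n ℂ) :
    braket2 φ M φ = (M * vecMulVec φ (star φ)).trace := by
  simp only [braket2, trace, diag, mul_apply, vecMulVec_apply, dotProduct, mulVec,
    Finset.mul_sum, Pi.star_apply]
  ac_rfl

end braket

lemma Complex.re_div_le_of_re_le_mul {z w : ℂ} {c : ℝ} (hc : 0 ≤ c) (hw : 0 ≤ w)
    (h : z.re ≤ c * w.re) : (z / w).re ≤ c := by
  obtain ⟨hre, him⟩ := Complex.nonneg_iff.mp hw
  rw [← Complex.re_add_im w, ← him, Complex.ofReal_zero, zero_mul, add_zero,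
    Complex.div_ofReal_re]
  rcases hre.eq_or_lt with hzero | hpos
  · rwa [← hzero, div_zero]
  · rwa [div_le_iff₀ hpos]

lemma bell_zero_zero : bell 0 0 = bell00 := by
  simp [bell]

lemma bell00_mul_conj (x y : Fin 2 × Fin 2) :
    bell00 x * starRingEnd ℂ (bell00 y) = if x.1 = x.2 ∧ y.1 = y.2 then 1 / 2 else 0 := by
  unfold bell00
  split_ifs <;> simp_all [Complex.conj_ofReal, ← sq, ← Complex.ofReal_pow]

lemma braket2_bell00 (B : Op₂) :
    braket2 bell00 B bell00 = 1 / 2 * ∑ a : Fin 2, ∑ b : Fin 2, B (a, a) (b, b) := by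
  simp only [braket2, dotProduct, mulVec, Finset.mul_sum, Pi.star_apply, RCLike.star_def]
  simp [mul_left_comm _ (B _ _), mul_comm (starRingEnd ℂ _), bell00_mul_conj,
    Fintype.sum_prod_type, Fin.sum_univ_two]
  ring

lemma bproj_zero_zero_apply (x y : Fin 2 × Fin 2) :
    bproj 0 0 x y = if x.1 = x.2 ∧ y.1 = y.2 then 1 / 2 else 0 := by
  simp [bproj, bell_zero_zero, vecMulVec_apply, bell00_mul_conj]

lemma trace_bproj_zero_zero : (bproj 0 0).trace = 1 := by
  simp [trace, bproj_zero_zero_apply, Fintype.sum_prod_type]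

lemma braket2_bell00_bproj : braket2 bell00 (bproj 0 0) bell00 = 1 := by
  simp [braket2_bell00, bproj_zero_zero_apply]

/-- `insertMiddle ψ` maps `|b₁ b₂⟩` to `|b₁⟩ ⊗ |ψ⟩_{A₁A₂} ⊗ |b₂⟩`, with the registers grouped
as `(B₁, A₁), (A₂, B₂)` like in `swapProj`. -/
def insertMiddle (ψ : Fin 2 × Fin 2 → ℂ) :
    Matrix ((Fin 2 × Fin 2) × (Fin 2 × Fin 2)) (Fin 2 × Fin 2) ℂ :=
  fun x q => if x.1.1 = q.1 ∧ x.2.2 = q.2 then ψ (x.1.2, x.2.1) else 0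

lemma swapProj_eq_conjTranspose_mul_mul (ψ : Fin 2 × Fin 2 → ℂ) (M : Op₄) :
    swapProj ψ M = (insertMiddle ψ)ᴴ * M * insertMiddle ψ := by
  ext p q
  rw [Matrix.mul_assoc]
  simp only [swapProj, insertMiddle, mul_apply, Fintype.sum_prod_type, conjTranspose_apply,
    apply_ite star, star_zero, ite_and, ite_mul, mul_ite, zero_mul, mul_zero, Finset.mul_sum,
    Finset.sum_ite_irrel, Finset.sum_const_zero, Finset.sum_ite_eq', Finset.mem_univ, if_true,
    mul_assoc]

lemma swapProj_add (ψ : Fin 2 × Fin 2 → ℂ) (M N : Op₄) :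
    swapProj ψ (M + N) = swapProj ψ M + swapProj ψ N := by
  simp only [swapProj_eq_conjTranspose_mul_mul, Matrix.mul_add, Matrix.add_mul]

lemma swapProj_smul (ψ : Fin 2 × Fin 2 → ℂ) (c : ℂ) (M : Op₄) :
    swapProj ψ (c • M) = c • swapProj ψ M := by
  simp only [swapProj_eq_conjTranspose_mul_mul, Matrix.mul_smul, Matrix.smul_mul]

lemma Matrix.PosSemidef.swapProj (ψ : Fin 2 × Fin 2 → ℂ) {M : Op₄} (hM : M.PosSemidef) :
    (swapProj ψ M).PosSemidef := by
  rw [swapProj_eq_conjTranspose_mul_mul]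
  exact hM.conjTranspose_mul_mul_same _

lemma swapProj_bell00_kronecker (A B : Op₂) (p q : Fin 2 × Fin 2) :
    swapProj bell00 (A ⊗ₖ B) p q
      = 1 / 2 * ∑ a : Fin 2, ∑ a' : Fin 2, A (p.1, a) (q.1, a') * B (a, p.2) (a', q.2) := by
  simp only [swapProj, kroneckerMap_apply, mul_comm (star _), mul_assoc]
  simp [bell00_mul_conj, Fin.sum_univ_two]
  ring

lemma swapNum_add (i j : Fin 2) (M N : Op₄) :
    swapNum i j (M + N) = swapNum i j M + swapNum i j N := by
  simp only [swapNum, swapProj_add, braket2_add]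

lemma swapNum_smul (i j : Fin 2) (c : ℂ) (M : Op₄) :
    swapNum i j (c • M) = c * swapNum i j M := by
  simp only [swapNum, swapProj_smul, braket2_smul]

lemma swapProb_add (i j : Fin 2) (M N : Op₄) :
    swapProb i j (M + N) = swapProb i j M + swapProb i j N := by
  simp only [swapProb, swapProj_add, trace_add]

lemma swapProb_smul (i j : Fin 2) (c : ℂ) (M : Op₄) :
    swapProb i j (c • M) = c * swapProb i j M := by
  simp only [swapProb, swapProj_smul, trace_smul, smul_eq_mul]

lemma swapProb_nonneg (i j : Fin 2) {M : Op₄} (hM : M.PosSemidef) : 0 ≤ swapProb i j M :=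
  (hM.swapProj _).trace_nonneg

lemma swapNum_kronecker (A B : Op₂) :
    swapNum 0 0 (A ⊗ₖ B) = 1 / 4 * (A * Bᵀ.submatrix Prod.swap Prod.swap).trace := by
  simp [swapNum, bell_zero_zero, braket2_bell00, swapProj_bell00_kronecker, trace, mul_apply,
    Fintype.sum_prod_type, Fin.sum_univ_two]
  ring

lemma swapNum_bproj_kronecker (B : Op₂) :
    swapNum 0 0 (bproj 0 0 ⊗ₖ B) = 1 / 4 * braket2 bell00 B bell00 := by
  simp [swapNum_kronecker, braket2_bell00, bproj_zero_zero_apply, trace, mul_apply,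
    Fintype.sum_prod_type, Fin.sum_univ_two]
  ring

lemma swapNum_kronecker_bproj (A : Op₂) :
    swapNum 0 0 (A ⊗ₖ bproj 0 0) = 1 / 4 * braket2 bell00 A bell00 := by
  simp [swapNum_kronecker, braket2_bell00, bproj_zero_zero_apply, trace, mul_apply,
    Fintype.sum_prod_type, Fin.sum_univ_two]
  ring

lemma swapProb_bproj_kronecker (B : Op₂) :
    swapProb 0 0 (bproj 0 0 ⊗ₖ B) = 1 / 4 * B.trace := by
  simp [swapProb, bell_zero_zero, swapProj_bell00_kronecker, bproj_zero_zero_apply, trace,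
    Fintype.sum_prod_type, Fin.sum_univ_two]
  ring

lemma swapProb_kronecker_bproj (A : Op₂) :
    swapProb 0 0 (A ⊗ₖ bproj 0 0) = 1 / 4 * A.trace := by
  simp [swapProb, bell_zero_zero, swapProj_bell00_kronecker, bproj_zero_zero_apply, trace,
    Fintype.sum_prod_type, Fin.sum_univ_two]
  ring

lemma re_swapNum_le_re_swapProb {M : Op₄} (hM : M.PosSemidef) :
    (swapNum 0 0 M).re ≤ (swapProb 0 0 M).re := by
  have h := (hM.swapProj (bell 0 0)).re_trace_mul_le (posSemidef_vecMulVec_self_star (bell 0 0))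
  rw [← bproj, trace_bproj_zero_zero, RCLike.one_re, mul_one] at h
  rwa [swapNum, swapProb, braket2_eq_trace_mul_vecMulVec]

lemma re_swapNum_kronecker_le_quarter {σ₁ σ₂ : Op₂} (hσ₁ : IsDensity σ₁) (hσ₂ : IsDensity σ₂) :
    (swapNum 0 0 (σ₁ ⊗ₖ σ₂)).re ≤ 1 / 4 := by
  have h := hσ₁.1.re_trace_mul_le (hσ₂.1.transpose.submatrix Prod.swap)
  have htrace : (σ₂ᵀ.submatrix Prod.swap Prod.swap).trace = σ₂.trace := by
    rw [← trace_transpose σ₂]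
    exact Fintype.sum_equiv (Equiv.prodComm _ _) _ _ fun _ => rfl
  rw [htrace, hσ₁.2, hσ₂.2] at h
  rw [swapNum_kronecker, show (1 / 4 : ℂ) = ((1 / 4 : ℝ) : ℂ) by norm_num, Complex.re_ofReal_mul]
  norm_num at h ⊢
  linarith

lemma posSemidef_mixture {p : ℝ} (hp₀ : 0 ≤ p) (hp₁ : p ≤ 1) {σ : Op₂} (hσ : σ.PosSemidef) :
    ((p : ℂ) • bproj 0 0 + ((1 - p : ℝ) : ℂ) • σ).PosSemidef :=
  ((posSemidef_vecMulVec_self_star _).smul (by exact_mod_cast hp₀)).add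
    (hσ.smul (by exact_mod_cast sub_nonneg.mpr hp₁))

lemma braket2_bell00_of_braket2_mixture {p F : ℝ} {σ : Op₂}
    (hF : braket2 (bell 0 0) ((p : ℂ) • bproj 0 0 + ((1 - p : ℝ) : ℂ) • σ) (bell 0 0) = F) :
    ((1 - p : ℝ) : ℂ) * braket2 bell00 σ bell00 = ((F - p : ℝ) : ℂ) := by
  rw [bell_zero_zero, braket2_add, braket2_smul, braket2_smul, braket2_bell00_bproj] at hF
  push_cast at hF ⊢
  linear_combination hF

lemma re_swapNum_kronecker_mixture {p₁ F₁ p₂ F₂ : ℝ} {σ₁ σ₂ : Op₂}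
    (hF₁ : braket2 (bell 0 0) ((p₁ : ℂ) • bproj 0 0 + ((1 - p₁ : ℝ) : ℂ) • σ₁) (bell 0 0) = F₁)
    (hF₂ : braket2 (bell 0 0) ((p₂ : ℂ) • bproj 0 0 + ((1 - p₂ : ℝ) : ℂ) • σ₂) (bell 0 0) = F₂) :
    (swapNum 0 0 (((p₁ : ℂ) • bproj 0 0 + ((1 - p₁ : ℝ) : ℂ) • σ₁) ⊗ₖ
        ((p₂ : ℂ) • bproj 0 0 + ((1 - p₂ : ℝ) : ℂ) • σ₂))).re
      = (p₁ * F₂ + p₂ * F₁ - p₁ * p₂) / 4 + (1 - p₁) * (1 - p₂) * (swapNum 0 0 (σ₁ ⊗ₖ σ₂)).re := by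
  have h₁ := braket2_bell00_of_braket2_mixture hF₁
  have h₂ := braket2_bell00_of_braket2_mixture hF₂
  have h : swapNum 0 0 (((p₁ : ℂ) • bproj 0 0 + ((1 - p₁ : ℝ) : ℂ) • σ₁) ⊗ₖ
        ((p₂ : ℂ) • bproj 0 0 + ((1 - p₂ : ℝ) : ℂ) • σ₂))
      = (((p₁ * F₂ + p₂ * F₁ - p₁ * p₂) / 4 : ℝ) : ℂ)
        + (((1 - p₁) * (1 - p₂) : ℝ) : ℂ) * swapNum 0 0 (σ₁ ⊗ₖ σ₂) := by
    simp only [add_kronecker, kronecker_add, smul_kronecker, kronecker_smul, swapNum_add,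
      swapNum_smul, swapNum_bproj_kronecker, swapNum_kronecker_bproj, braket2_bell00_bproj]
    push_cast at h₁ h₂ ⊢
    linear_combination (p₁ / 4 : ℂ) * h₂ + (p₂ / 4 : ℂ) * h₁
  rw [h, Complex.add_re, Complex.re_ofReal_mul, Complex.ofReal_re]

lemma re_swapProb_kronecker_mixture {p₁ p₂ : ℝ} {σ₁ σ₂ : Op₂}
    (hσ₁ : σ₁.trace = 1) (hσ₂ : σ₂.trace = 1) :
    (swapProb 0 0 (((p₁ : ℂ) • bproj 0 0 + ((1 - p₁ : ℝ) : ℂ) • σ₁) ⊗ₖ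
        ((p₂ : ℂ) • bproj 0 0 + ((1 - p₂ : ℝ) : ℂ) • σ₂))).re
      = (p₁ + p₂ - p₁ * p₂) / 4 + (1 - p₁) * (1 - p₂) * (swapProb 0 0 (σ₁ ⊗ₖ σ₂)).re := by
  have h : swapProb 0 0 (((p₁ : ℂ) • bproj 0 0 + ((1 - p₁ : ℝ) : ℂ) • σ₁) ⊗ₖ
        ((p₂ : ℂ) • bproj 0 0 + ((1 - p₂ : ℝ) : ℂ) • σ₂))
      = (((p₁ + p₂ - p₁ * p₂) / 4 : ℝ) : ℂ)
        + (((1 - p₁) * (1 - p₂) : ℝ) : ℂ) * swapProb 0 0 (σ₁ ⊗ₖ σ₂) := by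
    simp only [add_kronecker, kronecker_add, smul_kronecker, kronecker_smul, swapProb_add,
      swapProb_smul, swapProb_bproj_kronecker, swapProb_kronecker_bproj, trace_bproj_zero_zero,
      hσ₁, hσ₂]
    push_cast
    ring
  rw [h, Complex.add_re, Complex.re_ofReal_mul, Complex.ofReal_re]

lemma swap_bound_nonneg {p₁ F₁ p₂ F₂ : ℝ}
    (hp₁ : 0 ≤ p₁) (hpF₁ : p₁ ≤ F₁) (hF₁ : F₁ ≤ 1)
    (hp₂ : 0 ≤ p₂) (hpF₂ : p₂ ≤ F₂) (hF₂ : F₂ ≤ 1) :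
    0 ≤ 1 - p₁ * (1 - F₂) - p₂ * (1 - F₁) := by
  nlinarith [mul_nonneg hp₁ (sub_nonneg.mpr hpF₂), mul_nonneg hp₂ (sub_nonneg.mpr hpF₁),
    mul_nonneg (sub_nonneg.mpr (hpF₁.trans hF₁)) (sub_nonneg.mpr (hpF₂.trans hF₂))]

lemma swap_numerator_le_bound_mul_denominator {p₁ F₁ p₂ F₂ t s : ℝ}
    (hp₁ : 0 ≤ p₁) (hpF₁ : p₁ ≤ F₁) (hF₁ : F₁ ≤ 1)
    (hp₂ : 0 ≤ p₂) (hpF₂ : p₂ ≤ F₂) (hF₂ : F₂ ≤ 1) (hts : t ≤ s) (ht : t ≤ 1 / 4) :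
    (p₁ * F₂ + p₂ * F₁ - p₁ * p₂) / 4 + (1 - p₁) * (1 - p₂) * t
      ≤ (1 - p₁ * (1 - F₂) - p₂ * (1 - F₁))
        * ((p₁ + p₂ - p₁ * p₂) / 4 + (1 - p₁) * (1 - p₂) * s) := by
  have hδ : 0 ≤ (1 - p₁) * (1 - p₂) :=
    mul_nonneg (sub_nonneg.mpr (hpF₁.trans hF₁)) (sub_nonneg.mpr (hpF₂.trans hF₂))
  have hC := swap_bound_nonneg hp₁ hpF₁ hF₁ hp₂ hpF₂ hF₂
  have hC₁ : 1 - p₁ * (1 - F₂) - p₂ * (1 - F₁) ≤ 1 := by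
    nlinarith [mul_nonneg hp₁ (sub_nonneg.mpr hF₂), mul_nonneg hp₂ (sub_nonneg.mpr hF₁)]
  linarith [mul_nonneg (mul_nonneg hC hδ) (sub_nonneg.mpr hts),
    mul_nonneg (mul_nonneg hδ (sub_nonneg.mpr hC₁)) (sub_nonneg.mpr ht)]

/-- Tight upper bound on the postselected swap fidelity: for
ρ_k ∈ S_{p_k,F_k}, F'₀₀(ρ₁⊗ρ₂) ≤ 1 − p₁(1−F₂) − p₂(1−F₁); in particular for
ρ₁, ρ₂ ∈ S_{p,F}, F'₀₀ ≤ 1 − 2p(1−F). -/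
theorem swap_fidelity_upper_bound (p₁ F₁ p₂ F₂ : ℝ)
    (hp₁ : 0 ≤ p₁) (hpF₁ : p₁ ≤ F₁) (hF₁ : F₁ ≤ 1)
    (hp₂ : 0 ≤ p₂) (hpF₂ : p₂ ≤ F₂) (hF₂ : F₂ ≤ 1)
    (ρ₁ ρ₂ : Matrix (Fin 2 × Fin 2) (Fin 2 × Fin 2) ℂ)
    (hρ₁ : ρ₁ ∈ Spf p₁ F₁) (hρ₂ : ρ₂ ∈ Spf p₂ F₂) :
    (swapFid 0 0 (ρ₁ ⊗ₖ ρ₂)).re ≤ 1 - p₁ * (1 - F₂) - p₂ * (1 - F₁) ∧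
    (p₁ = p₂ → F₁ = F₂ →
      (swapFid 0 0 (ρ₁ ⊗ₖ ρ₂)).re ≤ 1 - 2 * p₁ * (1 - F₁)) := by
  obtain ⟨⟨σ₁, hσ₁, rfl⟩, hρF₁⟩ := hρ₁
  obtain ⟨⟨σ₂, hσ₂, rfl⟩, hρF₂⟩ := hρ₂
  have hD : 0 ≤ swapProb 0 0 _ := swapProb_nonneg 0 0
    ((posSemidef_mixture hp₁ (hpF₁.trans hF₁) hσ₁.1).kronecker
      (posSemidef_mixture hp₂ (hpF₂.trans hF₂) hσ₂.1))
  have hND := swap_numerator_le_bound_mul_denominator hp₁ hpF₁ hF₁ hp₂ hpF₂ hF₂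
    (re_swapNum_le_re_swapProb (hσ₁.1.kronecker hσ₂.1))
    (re_swapNum_kronecker_le_quarter hσ₁ hσ₂)
  rw [← re_swapNum_kronecker_mixture hρF₁ hρF₂, ← re_swapProb_kronecker_mixture hσ₁.2 hσ₂.2]
    at hND
  have hFid : (swapFid 0 0 _).re ≤ _ := Complex.re_div_le_of_re_le_mul
    (swap_bound_nonneg hp₁ hpF₁ hF₁ hp₂ hpF₂ hF₂) hD hND
  refine ⟨hFid, ?_⟩
  rintro rfl rfl
  linarith
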